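/- A signed graph G has a unique Laplacian inertia if and only if no block of G contains both a positive edge and a negative edge. -/

import Mathlib

open scoped Classical
open Polynomial

namespace SGPaper

/-- A weighted signed graph on `n` vertices, given by its symmetric hollow
matrix of edge weights (a nonzero entry `w i j` is the weight of the edge `ij`;
positive edges have positive weight, negative edges negative weight). -/
structure WSG (n : ℕ) where
  w : Matrix (Fin n) (Fin n) ℝ
  symm : w.IsSymm
  loopless : ∀ i, w i i = 0

variable {n : ℕ}

/-- The underlying simple graph. -/
def WSG.graph (Γ : WSG n) : SimpleGraph (Fin n) :=
  SimpleGraph.fromRel (fun i j => Γ.w i j ≠ 0)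

/-- The spanning subgraph of positive edges. -/
def WSG.posGraph (Γ : WSG n) : SimpleGraph (Fin n) :=
  SimpleGraph.fromRel (fun i j => 0 < Γ.w i j)

/-- The spanning subgraph of negative edges. -/
def WSG.negGraph (Γ : WSG n) : SimpleGraph (Fin n) :=
  SimpleGraph.fromRel (fun i j => Γ.w i j < 0)

/-- Number of connected components of a graph. -/
noncomputable def comps {V : Type*} (G : SimpleGraph V) : ℕ :=
  Nat.card G.ConnectedComponent

/-- Weighted Laplacian `L = A - D`. -/
def WSG.lap (Γ : WSG n) : Matrix (Fin n) (Fin n) ℝ :=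
  Γ.w - Matrix.diagonal (fun i => ∑ j, Γ.w i j)

theorem WSG.lap_isHermitian (Γ : WSG n) : Γ.lap.IsHermitian := by
  have h : Γ.lap.IsSymm := Γ.symm.sub (Matrix.isSymm_diagonal _)
  exact (Matrix.conjTranspose_eq_transpose_of_trivial _).trans h

/-- Number of positive eigenvalues of the Laplacian. -/
noncomputable def WSG.nPos (Γ : WSG n) : ℕ :=
  (Finset.univ.filter fun i => 0 < Γ.lap_isHermitian.eigenvalues i).card

/-- Number of negative eigenvalues of the Laplacian. -/
noncomputable def WSG.nNeg (Γ : WSG n) : ℕ :=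
  (Finset.univ.filter fun i => Γ.lap_isHermitian.eigenvalues i < 0).card

/-- Multiplicity of `0` as an eigenvalue of the Laplacian. -/
noncomputable def WSG.nZero (Γ : WSG n) : ℕ :=
  (Finset.univ.filter fun i => Γ.lap_isHermitian.eigenvalues i = 0).card

/-- The Laplacian inertia `(n₊, n₋, n₀)`. -/
noncomputable def WSG.inertia (Γ : WSG n) : ℕ × ℕ × ℕ := (Γ.nPos, Γ.nNeg, Γ.nZero)

/-- A signed graph: a pair of edge-disjoint simple graphs of positive and
negative edges on the vertex set `Fin n`. -/
structure SignedGraph (n : ℕ) where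
  pos : SimpleGraph (Fin n)
  neg : SimpleGraph (Fin n)
  disj : ∀ i j, ¬(pos.Adj i j ∧ neg.Adj i j)

/-- The underlying (unsigned) simple graph. -/
def SignedGraph.graph {n : ℕ} (G : SignedGraph n) : SimpleGraph (Fin n) := G.pos ⊔ G.neg

/-- `Γ` is a consistent weighting of the signed graph `G`: the positive edges of
`Γ` are exactly the positive edges of `G` and likewise for negative edges. -/
def Consistent {n : ℕ} (G : SignedGraph n) (Γ : WSG n) : Prop :=
  Γ.posGraph = G.pos ∧ Γ.negGraph = G.neg

/-- `G` has the unique Laplacian inertia `T`: every consistent weighting of `G`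
has Laplacian inertia `T`. -/
def HasUniqueInertia {n : ℕ} (G : SignedGraph n) (T : ℕ × ℕ × ℕ) : Prop :=
  ∀ Γ : WSG n, Consistent G Γ → Γ.inertia = T

/-- `B` is a block of `G`: a maximal set of vertices inducing a connected
subgraph with no cut vertex. -/
def IsBlock {V : Type*} (G : SimpleGraph V) (B : Set V) : Prop :=
  (G.induce B).Connected ∧
  (∀ v : V, (G.induce (B \ {v})).Preconnected) ∧
  ∀ B' : Set V, B ⊆ B' → (G.induce B').Connected →
    (∀ v : V, (G.induce (B' \ {v})).Preconnected) → B' = B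

end SGPaper

/-!
Write `K₊`, `K₋` and `K = K₊ ⊓ K₋` for the spaces of vectors that are constant along the positive
edges, the negative edges and all edges. For a consistent weighting the Laplacian quadratic form is
`-(1/2) ∑ wᵢⱼ (xᵢ - xⱼ)²`: it is positive definite on `Kᗮ ⊓ K₊`, negative definite on `Kᗮ ⊓ K₋`,
and the Laplacian vanishes on `K`. When `K₊ + K₋` is the whole space these dimensions add up to
`n`, which pins the inertia down. Otherwise, making the negative (resp. positive) weights tiny
makes the form negative definite on `K₊ᗮ` (resp. positive definite on `K₋ᗮ`), and these two
weightings have different numbers of positive eigenvalues.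

The indicator of a vertex `p` lies in `K₊ + K₋` iff every walk from a positive neighbour of `p` to
a negative neighbour of `p` passes through `p`. A walk avoiding `p` closes a cycle through `p`
carrying edges of both signs, hence a mixed block; conversely, in a mixed block some vertex has
edges of both signs, and their other ends are joined in the block with that vertex removed.
-/

open Module Matrix

lemma finrank_le_card_of_inner_eq_zero {ι E : Type*} [NormedAddCommGroup E]
    [InnerProductSpace ℝ E] (v : ι → E) (s : Finset ι) (W : Submodule ℝ E)
    (hW : ∀ x ∈ W, (∀ i ∈ s, inner ℝ (v i) x = 0) → x = 0) :
    finrank ℝ W ≤ s.card := by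
  let f : W →ₗ[ℝ] s → ℝ := LinearMap.pi fun i => (innerₛₗ ℝ (v i)).comp W.subtype
  have hf : Function.Injective f := by
    rw [← LinearMap.ker_eq_bot, Submodule.eq_bot_iff]
    intro x hx
    exact Subtype.ext (hW x x.2 fun i hi => congrFun hx ⟨i, hi⟩)
  simpa using LinearMap.finrank_le_finrank_of_injective hf

namespace Matrix.IsHermitian

variable {ι : Type*} [Fintype ι] [DecidableEq ι] {A : Matrix ι ι ℝ} (hA : A.IsHermitian)

lemma inner_eigenvectorBasis_toEuclideanLin (i : ι) (x : EuclideanSpace ℝ ι) :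
    inner ℝ (hA.eigenvectorBasis i) (toEuclideanLin A x)
      = hA.eigenvalues i * inner ℝ (hA.eigenvectorBasis i) x := by
  have hb : toEuclideanLin A (hA.eigenvectorBasis i) = hA.eigenvalues i • hA.eigenvectorBasis i :=
    congrArg (WithLp.toLp 2) (hA.mulVec_eigenvectorBasis i)
  rw [← (isSymmetric_toEuclideanLin_iff.mpr hA), hb, real_inner_smul_left]

lemma inner_toEuclideanLin_self (x : EuclideanSpace ℝ ι) :
    inner ℝ x (toEuclideanLin A x)
      = ∑ i, hA.eigenvalues i * inner ℝ (hA.eigenvectorBasis i) x ^ 2 := by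
  rw [← hA.eigenvectorBasis.sum_inner_mul_inner]
  refine Finset.sum_congr rfl fun i _ => ?_
  rw [inner_eigenvectorBasis_toEuclideanLin, real_inner_comm]
  ring

lemma finrank_le_card_of_mul_inner_pos (ε : ℝ) (W : Submodule ℝ (EuclideanSpace ℝ ι))
    (hW : ∀ x ∈ W, x ≠ 0 → 0 < ε * inner ℝ x (toEuclideanLin A x)) :
    finrank ℝ W ≤ (Finset.univ.filter fun i => 0 < ε * hA.eigenvalues i).card := by
  refine finrank_le_card_of_inner_eq_zero hA.eigenvectorBasis _ W fun x hx hzero => ?_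
  by_contra hx0
  refine (hW x hx hx0).not_ge ?_
  rw [hA.inner_toEuclideanLin_self, Finset.mul_sum]
  refine Finset.sum_nonpos fun i _ => ?_
  by_cases hi : 0 < ε * hA.eigenvalues i
  · simp [hzero i (by simpa using hi)]
  · nlinarith [sq_nonneg (inner ℝ (hA.eigenvectorBasis i) x)]

lemma finrank_le_card_of_toEuclideanLin_eq_zero (W : Submodule ℝ (EuclideanSpace ℝ ι))
    (hW : ∀ x ∈ W, toEuclideanLin A x = 0) :
    finrank ℝ W ≤ (Finset.univ.filter fun i => hA.eigenvalues i = 0).card := by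
  refine finrank_le_card_of_inner_eq_zero hA.eigenvectorBasis _ W fun x hx hzero => ?_
  have hcoord : ∀ i, inner ℝ (hA.eigenvectorBasis i) x = 0 := fun i => by
    by_cases hi : hA.eigenvalues i = 0
    · exact hzero i (by simpa using hi)
    · have := hA.inner_eigenvectorBasis_toEuclideanLin i x
      rw [hW x hx, inner_zero_right, eq_comm, mul_eq_zero] at this
      exact this.resolve_left hi
  refine hA.eigenvectorBasis.repr.map_eq_zero_iff.mp ?_
  ext i
  simp [OrthonormalBasis.repr_apply_apply, hcoord i]

lemma card_pos_add_card_neg_add_card_zero :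
    (Finset.univ.filter fun i => 0 < hA.eigenvalues i).card
      + (Finset.univ.filter fun i => hA.eigenvalues i < 0).card
      + (Finset.univ.filter fun i => hA.eigenvalues i = 0).card = Fintype.card ι := by
  simp only [Finset.card_filter, ← Finset.sum_add_distrib]
  rw [← Finset.card_univ, Finset.card_eq_sum_ones]
  refine Finset.sum_congr rfl fun i _ => ?_
  rcases lt_trichotomy (hA.eigenvalues i) 0 with h | h | h
  · simp [h, h.ne, not_lt.2 h.le]
  · simp [h]
  · simp [h, h.ne', not_lt.2 h.le]

theorem inertia_eq_of_subspaces (Wp Wn Wz : Submodule ℝ (EuclideanSpace ℝ ι))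
    (hp : ∀ x ∈ Wp, x ≠ 0 → 0 < inner ℝ x (toEuclideanLin A x))
    (hn : ∀ x ∈ Wn, x ≠ 0 → inner ℝ x (toEuclideanLin A x) < 0)
    (hz : ∀ x ∈ Wz, toEuclideanLin A x = 0)
    (hdim : finrank ℝ Wp + finrank ℝ Wn + finrank ℝ Wz = Fintype.card ι) :
    (Finset.univ.filter fun i => 0 < hA.eigenvalues i).card = finrank ℝ Wp ∧
    (Finset.univ.filter fun i => hA.eigenvalues i < 0).card = finrank ℝ Wn ∧
    (Finset.univ.filter fun i => hA.eigenvalues i = 0).card = finrank ℝ Wz := by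
  have hle_p := hA.finrank_le_card_of_mul_inner_pos 1 Wp (by simpa using hp)
  have hle_n := hA.finrank_le_card_of_mul_inner_pos (-1) Wn (by simpa using hn)
  have hle_z := hA.finrank_le_card_of_toEuclideanLin_eq_zero Wz hz
  have hsum := hA.card_pos_add_card_neg_add_card_zero
  simp only [one_mul, neg_mul, Left.neg_pos_iff] at hle_p hle_n
  omega

end Matrix.IsHermitian

lemma exists_pos_mul_lt_of_homogeneous {E : Type*} [NormedAddCommGroup E] [NormedSpace ℝ E]
    [FiniteDimensional ℝ E] {f g : E → ℝ} (hf : Continuous f) (hg : Continuous g)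
    (hf2 : ∀ (c : ℝ) x, f (c • x) = c ^ 2 * f x) (hg2 : ∀ (c : ℝ) x, g (c • x) = c ^ 2 * g x)
    (hpos : ∀ x, x ≠ 0 → 0 < f x) :
    ∃ t : ℝ, 0 < t ∧ ∀ x, x ≠ 0 → t * g x < f x := by
  have hS : IsCompact (Metric.sphere (0 : E) 1) := isCompact_sphere 0 1
  have hfS : ∀ u ∈ Metric.sphere (0 : E) 1, 0 < f u := fun u hu =>
    hpos u (ne_zero_of_mem_unit_sphere ⟨u, hu⟩)
  obtain ⟨M, hM⟩ := (hS.image_of_continuousOn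
    (hg.continuousOn.div hf.continuousOn fun u hu => (hfS u hu).ne')).isBounded.bddAbove
  refine ⟨1 / (|M| + 1), by positivity, fun x hx => ?_⟩
  set u := ‖x‖⁻¹ • x
  have hu : u ∈ Metric.sphere (0 : E) 1 := by simp [u, norm_smul, hx]
  have hxu : x = ‖x‖ • u := by simp [u, smul_smul, hx]
  have hfu := hfS u hu
  have hgu : g u ≤ |M| * f u := by
    have := hM ⟨u, hu, rfl⟩
    rw [Pi.div_apply, div_le_iff₀ hfu] at this
    nlinarith [le_abs_self M]
  have hlt : 1 / (|M| + 1) * g u < f u := by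
    rw [div_mul_eq_mul_div, one_mul, div_lt_iff₀ (by positivity)]
    nlinarith [abs_nonneg M]
  rw [hxu, hf2, hg2, mul_left_comm]
  exact mul_lt_mul_of_pos_left hlt (by positivity)

section DirichletEnergy

variable {V : Type*} [Fintype V]

def dirichletEnergy (c : Matrix V V ℝ) (x : V → ℝ) : ℝ :=
  ∑ i, ∑ j, c i j * (x i - x j) ^ 2

lemma dirichletEnergy_sub (c d : Matrix V V ℝ) (x : V → ℝ) :
    dirichletEnergy (c - d) x = dirichletEnergy c x - dirichletEnergy d x := by
  simp only [dirichletEnergy, Matrix.sub_apply, sub_mul, Finset.sum_sub_distrib]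

lemma dirichletEnergy_eq_posPart_sub_negPart (c : Matrix V V ℝ) (x : V → ℝ) :
    dirichletEnergy c x = dirichletEnergy (fun i j => (c i j)⁺) x
      - dirichletEnergy (fun i j => (c i j)⁻) x := by
  simp only [dirichletEnergy, ← Finset.sum_sub_distrib, ← sub_mul, posPart_sub_negPart]

lemma dirichletEnergy_smul (a : ℝ) (c : Matrix V V ℝ) (x : V → ℝ) :
    dirichletEnergy (a • c) x = a * dirichletEnergy c x := by
  simp only [dirichletEnergy, Matrix.smul_apply, smul_eq_mul, Finset.mul_sum, mul_assoc]

lemma dirichletEnergy_smul_right (c : Matrix V V ℝ) (r : ℝ) (x : V → ℝ) :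
    dirichletEnergy c (r • x) = r ^ 2 * dirichletEnergy c x := by
  simp only [dirichletEnergy, Pi.smul_apply, smul_eq_mul, Finset.mul_sum]
  exact Finset.sum_congr rfl fun i _ => Finset.sum_congr rfl fun j _ => by ring

lemma dirichletEnergy_nonneg {c : Matrix V V ℝ} (hc : ∀ i j, 0 ≤ c i j) (x : V → ℝ) :
    0 ≤ dirichletEnergy c x :=
  Finset.sum_nonneg fun i _ => Finset.sum_nonneg fun j _ => mul_nonneg (hc i j) (sq_nonneg _)

lemma dirichletEnergy_eq_zero_iff {c : Matrix V V ℝ} (hc : ∀ i j, 0 ≤ c i j) (x : V → ℝ) :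
    dirichletEnergy c x = 0 ↔ ∀ i j, 0 < c i j → x i = x j := by
  have hterm : ∀ i j, 0 ≤ c i j * (x i - x j) ^ 2 := fun i j => mul_nonneg (hc i j) (sq_nonneg _)
  simp only [dirichletEnergy,
    Finset.sum_eq_zero_iff_of_nonneg (fun i _ => Finset.sum_nonneg fun j _ => hterm i j),
    Finset.sum_eq_zero_iff_of_nonneg (fun j _ => hterm _ j), Finset.mem_univ, true_imp_iff, mul_eq_zero, pow_eq_zero_iff two_ne_zero, sub_eq_zero]
  exact forall₂_congr fun i j => ⟨fun h hpos => h.resolve_left hpos.ne',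
    fun h => (hc i j).eq_or_lt.imp Eq.symm h⟩

lemma continuous_dirichletEnergy (c : Matrix V V ℝ) :
    Continuous fun x : EuclideanSpace ℝ V => dirichletEnergy c x := by
  unfold dirichletEnergy
  fun_prop

end DirichletEnergy

namespace SimpleGraph

variable {V : Type*} (H : SimpleGraph V)

def constOnEdges : Submodule ℝ (EuclideanSpace ℝ V) where
  carrier := {x | ∀ i j, H.Adj i j → x i = x j}
  add_mem' hx hy i j h := by simp [hx i j h, hy i j h]
  zero_mem' _ _ _ := rfl
  smul_mem' c x hx i j h := by simp [hx i j h]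

variable {H}

lemma mem_constOnEdges {x : EuclideanSpace ℝ V} :
    x ∈ H.constOnEdges ↔ ∀ i j, H.Adj i j → x i = x j := Iff.rfl

lemma constOnEdges_sup (H' : SimpleGraph V) :
    (H ⊔ H').constOnEdges = H.constOnEdges ⊓ H'.constOnEdges := by
  ext x
  simp only [Submodule.mem_inf, mem_constOnEdges, sup_adj]
  exact ⟨fun h => ⟨fun i j hij => h i j (Or.inl hij), fun i j hij => h i j (Or.inr hij)⟩,
    fun h i j => Or.rec (h.1 i j) (h.2 i j)⟩

lemma toLp_indicator_mem_constOnEdges {s : Set V} (hs : ∀ i j, H.Adj i j → i ∈ s → j ∈ s) :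
    WithLp.toLp 2 (s.indicator 1) ∈ H.constOnEdges := by
  intro i j hij
  have : i ∈ s ↔ j ∈ s := ⟨hs i j hij, hs j i hij.symm⟩
  by_cases hi : i ∈ s <;> simp [hi, this.not.1, this.1]

lemma Walk.apply_eq_of_notMem_support {α : Type*} {f : V → α} {p : V}
    (hf : ∀ x y, H.Adj x y → x ≠ p → y ≠ p → f x = f y) {u v : V} (w : H.Walk u v)
    (hp : p ∉ w.support) : f u = f v := by
  induction w with
  | nil => rfl
  | cons h w ih =>
    rw [Walk.support_cons, List.mem_cons, not_or] at hp
    exact (hf _ _ h (Ne.symm hp.1) fun h' => hp.2 (h' ▸ w.start_mem_support)).trans (ih hp.2)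

lemma Walk.IsPath.eq_of_mem_support_takeUntil_of_mem_support_dropUntil {u v x z : V}
    {P : H.Walk u v} (hP : P.IsPath) (hz : z ∈ P.support)
    (hx₁ : x ∈ (P.takeUntil z hz).support) (hx₂ : x ∈ (P.dropUntil z hz).support) : x = z := by
  have hnd := hP.support_nodup
  rw [← P.take_spec hz, Walk.support_append] at hnd
  rw [← Walk.cons_tail_support] at hx₂
  exact (List.mem_cons.1 hx₂).resolve_right fun h => List.disjoint_of_nodup_append hnd hx₁ h

lemma preconnected_induce_of_forall_walk {s : Set V} (c : V)
    (h : ∀ z ∈ s, ∃ w : H.Walk c z, ∀ y ∈ w.support, y ∈ s) : (H.induce s).Preconnected := by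
  rintro ⟨a, ha⟩ ⟨b, hb⟩
  obtain ⟨wa, hwa⟩ := h a ha
  obtain ⟨wb, hwb⟩ := h b hb
  exact ((wa.induce s hwa).reverse.append (wb.induce s hwb)).reachable

lemma Walk.connected_induce_insert_support {p u v : V} (hu : H.Adj p u) (P : H.Walk u v) :
    (H.induce (insert p {z | z ∈ P.support})).Connected := by
  rw [Set.insert_eq]
  exact connected_induce_union .of_subsingleton P.connected_induce_support.preconnected rfl
    P.start_mem_support hu

lemma Walk.IsPath.preconnected_induce_insert_support_diff {p u v : V} {P : H.Walk u v}
    (hP : P.IsPath) (hu : H.Adj p u) (hv : H.Adj p v) (hpP : p ∉ P.support) (x : V) :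
    (H.induce (insert p {z | z ∈ P.support} \ {x})).Preconnected := by
  by_cases hxp : x = p
  · rw [hxp, Set.insert_sdiff_self_of_notMem (s := {z | z ∈ P.support}) hpP]
    exact P.connected_induce_support.preconnected
  refine preconnected_induce_of_forall_walk p ?_
  rintro z ⟨rfl | hz, hzx⟩
  · exact ⟨.nil, by simpa using Ne.symm hxp⟩
  -- Reach `z` from `p` along whichever half of `P`, split at `z`, avoids `x`.
  by_cases hx : x ∈ (P.takeUntil z hz).support
  · have hx' : x ∉ (P.dropUntil z hz).support := fun h =>
      hzx (hP.eq_of_mem_support_takeUntil_of_mem_support_dropUntil hz hx h).symm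
    refine ⟨.cons hv (P.dropUntil z hz).reverse, fun y hy => ?_⟩
    rw [support_cons, support_reverse, List.mem_cons, List.mem_reverse] at hy
    rcases hy with rfl | hy
    · exact ⟨Set.mem_insert _ _, Ne.symm hxp⟩
    · exact ⟨Or.inr (P.support_dropUntil_subset_support hz hy), fun h => hx' (h ▸ hy)⟩
  · refine ⟨.cons hu (P.takeUntil z hz), fun y hy => ?_⟩
    rw [support_cons, List.mem_cons] at hy
    rcases hy with rfl | hy
    · exact ⟨Set.mem_insert _ _, Ne.symm hxp⟩
    · exact ⟨Or.inr (P.support_takeUntil_subset_support hz hy), fun h => hx (h ▸ hy)⟩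

variable [Fintype V]

lemma mem_constOnEdges_iff_dirichletEnergy_eq_zero {c : Matrix V V ℝ} (hc : ∀ i j, 0 ≤ c i j)
    (hH : ∀ i j, H.Adj i j ↔ 0 < c i j) {x : EuclideanSpace ℝ V} :
    x ∈ H.constOnEdges ↔ dirichletEnergy c x = 0 := by
  simp only [dirichletEnergy_eq_zero_iff hc, mem_constOnEdges, hH]

lemma exists_pos_mul_dirichletEnergy_lt [DecidableRel H.Adj] (H' : SimpleGraph V)
    [DecidableRel H'.Adj] :
    ∃ t : ℝ, 0 < t ∧ ∀ x ∈ H.constOnEdgesᗮ, x ≠ 0 →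
      t * dirichletEnergy (H'.adjMatrix ℝ) x < dirichletEnergy (H.adjMatrix ℝ) x := by
  have hnonneg : ∀ (K : SimpleGraph V) [DecidableRel K.Adj] (i j : V), 0 ≤ K.adjMatrix ℝ i j :=
    fun K _ i j => by by_cases h : K.Adj i j <;> simp [h]
  have hadj : ∀ i j, H.Adj i j ↔ 0 < H.adjMatrix ℝ i j := fun i j => by
    by_cases h : H.Adj i j <;> simp [h]
  obtain ⟨t, ht, hlt⟩ := exists_pos_mul_lt_of_homogeneous
    (f := fun x : H.constOnEdgesᗮ => dirichletEnergy (H.adjMatrix ℝ) (x : EuclideanSpace ℝ V))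
    (g := fun x : H.constOnEdgesᗮ => dirichletEnergy (H'.adjMatrix ℝ) (x : EuclideanSpace ℝ V))
    ((continuous_dirichletEnergy _).comp continuous_subtype_val)
    ((continuous_dirichletEnergy _).comp continuous_subtype_val)
    (fun c x => dirichletEnergy_smul_right _ c _) (fun c x => dirichletEnergy_smul_right _ c _)
    (fun x hx => by
      refine (dirichletEnergy_nonneg (hnonneg H) _).lt_of_ne fun h => hx ?_
      have hmem := (mem_constOnEdges_iff_dirichletEnergy_eq_zero (hnonneg H) hadj).2 h.symm
      exact Subtype.ext (Submodule.disjoint_def.1 H.constOnEdges.orthogonal_disjoint _ hmem x.2))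
  exact ⟨t, ht, fun x hx hx0 => hlt ⟨x, hx⟩ (by simpa using hx0)⟩

end SimpleGraph

namespace SGPaper

section Blocks

variable {V : Type*} {H : SimpleGraph V}

lemma exists_isBlock_superset [Finite V] {C : Set V} (hconn : (H.induce C).Connected)
    (hcut : ∀ v, (H.induce (C \ {v})).Preconnected) : ∃ B, IsBlock H B ∧ C ⊆ B := by
  obtain ⟨B, hCB, hB⟩ := Finite.exists_le_maximal
    (p := fun S : Set V => (H.induce S).Connected ∧ ∀ v, (H.induce (S \ {v})).Preconnected)
    ⟨hconn, hcut⟩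
  exact ⟨B, ⟨hB.prop.1, hB.prop.2, fun B' hBB' h₁ h₂ => hB.eq_of_ge ⟨h₁, h₂⟩ hBB'⟩, hCB⟩

lemma exists_isBlock_of_walk [Finite V] {p u v : V} (hu : H.Adj p u) (hv : H.Adj p v)
    (w : H.Walk u v) (hp : p ∉ w.support) : ∃ B, IsBlock H B ∧ p ∈ B ∧ u ∈ B ∧ v ∈ B := by
  have hpP : p ∉ w.bypass.support := fun h => hp (w.support_bypass_subset_support h)
  obtain ⟨B, hB, hCB⟩ := exists_isBlock_superset (w.bypass.connected_induce_insert_support hu)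
    (w.bypass_isPath.preconnected_induce_insert_support_diff hu hv hpP)
  exact ⟨B, hB, hCB (Set.mem_insert _ _), hCB (Or.inr (SimpleGraph.Walk.start_mem_support _)),
    hCB (Or.inr (SimpleGraph.Walk.end_mem_support _))⟩

end Blocks

variable {n : ℕ}

namespace WSG

lemma lap_mulVec_apply (Γ : WSG n) (x : Fin n → ℝ) (i : Fin n) :
    (Γ.lap *ᵥ x) i = ∑ j, Γ.w i j * (x j - x i) := by
  rw [lap, sub_mulVec, Pi.sub_apply, mulVec_diagonal, mulVec, dotProduct, Finset.sum_mul,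
    ← Finset.sum_sub_distrib]
  exact Finset.sum_congr rfl fun j _ => by ring

lemma inner_toEuclideanLin_lap_self (Γ : WSG n) (x : EuclideanSpace ℝ (Fin n)) :
    inner ℝ x (toEuclideanLin Γ.lap x) = -(1 / 2) * dirichletEnergy Γ.w x := by
  have hswap : ∑ i, ∑ j, Γ.w i j * x j ^ 2 = ∑ i, ∑ j, Γ.w i j * x i ^ 2 := by
    rw [Finset.sum_comm]
    simp only [Γ.symm.apply]
  have hinner : inner ℝ x (toEuclideanLin Γ.lap x)
      = ∑ i, ∑ j, Γ.w i j * x i * x j - ∑ i, ∑ j, Γ.w i j * x i ^ 2 := by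
    simp only [PiLp.inner_apply, toLpLin_apply, lap_mulVec_apply, RCLike.inner_apply,
      conj_trivial, Finset.sum_mul, ← Finset.sum_sub_distrib]
    exact Finset.sum_congr rfl fun i _ => Finset.sum_congr rfl fun j _ => by ring
  have henergy : dirichletEnergy Γ.w x = ∑ i, ∑ j, Γ.w i j * x i ^ 2
      - 2 * ∑ i, ∑ j, Γ.w i j * x i * x j + ∑ i, ∑ j, Γ.w i j * x j ^ 2 := by
    simp only [dirichletEnergy, Finset.mul_sum, ← Finset.sum_sub_distrib, ← Finset.sum_add_distrib]
    exact Finset.sum_congr rfl fun i _ => Finset.sum_congr rfl fun j _ => by ring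
  rw [hinner, henergy, hswap]
  ring

lemma posGraph_adj (Γ : WSG n) {i j : Fin n} : Γ.posGraph.Adj i j ↔ 0 < Γ.w i j := by
  rw [posGraph, SimpleGraph.fromRel_adj, Γ.symm.apply, or_self]
  refine ⟨And.right, fun h => ⟨?_, h⟩⟩
  rintro rfl
  exact h.ne' (Γ.loopless i)

lemma negGraph_adj (Γ : WSG n) {i j : Fin n} : Γ.negGraph.Adj i j ↔ Γ.w i j < 0 := by
  rw [negGraph, SimpleGraph.fromRel_adj, Γ.symm.apply, or_self]
  refine ⟨And.right, fun h => ⟨?_, h⟩⟩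
  rintro rfl
  exact h.ne (Γ.loopless i)

lemma inner_toEuclideanLin_lap_self_eq_sub (Γ : WSG n) (x : EuclideanSpace ℝ (Fin n)) :
    inner ℝ x (toEuclideanLin Γ.lap x) = (1 / 2) * (dirichletEnergy (fun i j => (Γ.w i j)⁻) x
      - dirichletEnergy (fun i j => (Γ.w i j)⁺) x) := by
  rw [inner_toEuclideanLin_lap_self, dirichletEnergy_eq_posPart_sub_negPart]
  ring

theorem inertia_eq_of_subspaces (Γ : WSG n) (Wp Wn Wz : Submodule ℝ (EuclideanSpace ℝ (Fin n)))
    (hp : ∀ x ∈ Wp, x ≠ 0 → 0 < inner ℝ x (toEuclideanLin Γ.lap x))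
    (hn : ∀ x ∈ Wn, x ≠ 0 → inner ℝ x (toEuclideanLin Γ.lap x) < 0)
    (hz : ∀ x ∈ Wz, toEuclideanLin Γ.lap x = 0)
    (hdim : finrank ℝ Wp + finrank ℝ Wn + finrank ℝ Wz = n) :
    Γ.inertia = (finrank ℝ Wp, finrank ℝ Wn, finrank ℝ Wz) := by
  obtain ⟨h₁, h₂, h₃⟩ := Γ.lap_isHermitian.inertia_eq_of_subspaces Wp Wn Wz hp hn hz
    (by rwa [Fintype.card_fin])
  simp only [inertia, nPos, nNeg, nZero, h₁, h₂, h₃]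

end WSG

namespace SignedGraph

variable (G : SignedGraph n)

lemma constOnEdges_graph :
    G.graph.constOnEdges = G.pos.constOnEdges ⊓ G.neg.constOnEdges :=
  SimpleGraph.constOnEdges_sup _

lemma constOnEdges_graph_le_pos : G.graph.constOnEdges ≤ G.pos.constOnEdges :=
  G.constOnEdges_graph ▸ inf_le_left

lemma constOnEdges_graph_le_neg : G.graph.constOnEdges ≤ G.neg.constOnEdges :=
  G.constOnEdges_graph ▸ inf_le_right

variable {G} in
lemma eq_zero_of_mem_orthogonal {x : EuclideanSpace ℝ (Fin n)}
    (hx : x ∈ G.graph.constOnEdgesᗮ) (hpos : x ∈ G.pos.constOnEdges)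
    (hneg : x ∈ G.neg.constOnEdges) : x = 0 :=
  Submodule.disjoint_def.1 G.graph.constOnEdges.orthogonal_disjoint x
    (G.constOnEdges_graph ▸ ⟨hpos, hneg⟩) hx

end SignedGraph

namespace Consistent

variable {G : SignedGraph n} {Γ : WSG n}

lemma pos_adj_iff (hc : Consistent G Γ) {i j : Fin n} : G.pos.Adj i j ↔ 0 < Γ.w i j :=
  hc.1 ▸ Γ.posGraph_adj

lemma neg_adj_iff (hc : Consistent G Γ) {i j : Fin n} : G.neg.Adj i j ↔ Γ.w i j < 0 :=
  hc.2 ▸ Γ.negGraph_adj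

lemma toEuclideanLin_lap_eq_zero (hc : Consistent G Γ) {x : EuclideanSpace ℝ (Fin n)}
    (hx : x ∈ G.graph.constOnEdges) : toEuclideanLin Γ.lap x = 0 := by
  ext i
  simp only [toLpLin_apply, WSG.lap_mulVec_apply, PiLp.zero_apply]
  refine Finset.sum_eq_zero fun j _ => ?_
  rcases lt_trichotomy (Γ.w i j) 0 with h | h | h
  · rw [hx i j (Or.inr (hc.neg_adj_iff.2 h)), sub_self, mul_zero]
  · rw [h, zero_mul]
  · rw [hx i j (Or.inl (hc.pos_adj_iff.2 h)), sub_self, mul_zero]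

lemma mem_pos_iff (hc : Consistent G Γ) {x : EuclideanSpace ℝ (Fin n)} :
    x ∈ G.pos.constOnEdges ↔ dirichletEnergy (fun i j => (Γ.w i j)⁺) x = 0 :=
  SimpleGraph.mem_constOnEdges_iff_dirichletEnergy_eq_zero (fun _ _ => posPart_nonneg _)
    fun _ _ => hc.pos_adj_iff.trans posPart_pos_iff.symm

lemma mem_neg_iff (hc : Consistent G Γ) {x : EuclideanSpace ℝ (Fin n)} :
    x ∈ G.neg.constOnEdges ↔ dirichletEnergy (fun i j => (Γ.w i j)⁻) x = 0 :=
  SimpleGraph.mem_constOnEdges_iff_dirichletEnergy_eq_zero (fun _ _ => negPart_nonneg _)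
    fun _ _ => hc.neg_adj_iff.trans negPart_pos_iff.symm

lemma inner_lap_self_pos (hc : Consistent G Γ) {x : EuclideanSpace ℝ (Fin n)}
    (hx : x ∈ G.graph.constOnEdgesᗮ ⊓ G.pos.constOnEdges) (hx0 : x ≠ 0) :
    0 < inner ℝ x (toEuclideanLin Γ.lap x) := by
  rw [Γ.inner_toEuclideanLin_lap_self_eq_sub, hc.mem_pos_iff.1 hx.2, sub_zero]
  have hxN : x ∉ G.neg.constOnEdges := fun hxN =>
    hx0 (SignedGraph.eq_zero_of_mem_orthogonal hx.1 hx.2 hxN)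
  rw [hc.mem_neg_iff] at hxN
  exact mul_pos one_half_pos <|
    (dirichletEnergy_nonneg (fun _ _ => negPart_nonneg _) x).lt_of_ne' hxN

lemma inner_lap_self_neg (hc : Consistent G Γ) {x : EuclideanSpace ℝ (Fin n)}
    (hx : x ∈ G.graph.constOnEdgesᗮ ⊓ G.neg.constOnEdges) (hx0 : x ≠ 0) :
    inner ℝ x (toEuclideanLin Γ.lap x) < 0 := by
  rw [Γ.inner_toEuclideanLin_lap_self_eq_sub, hc.mem_neg_iff.1 hx.2, zero_sub]
  have hxP : x ∉ G.pos.constOnEdges := fun hxP =>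
    hx0 (SignedGraph.eq_zero_of_mem_orthogonal hx.1 hxP hx.2)
  rw [hc.mem_pos_iff] at hxP
  have := (dirichletEnergy_nonneg (fun _ _ => posPart_nonneg _) x).lt_of_ne' hxP
  linarith

end Consistent

namespace SignedGraph

variable (G : SignedGraph n)

noncomputable def weighting (a b : ℝ) : WSG n where
  w := a • G.pos.adjMatrix ℝ - b • G.neg.adjMatrix ℝ
  symm := (G.pos.isSymm_adjMatrix.smul a).sub (G.neg.isSymm_adjMatrix.smul b)
  loopless i := by simp

lemma weighting_w_apply (a b : ℝ) (i j : Fin n) :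
    (G.weighting a b).w i j = if G.pos.Adj i j then a else if G.neg.Adj i j then -b else 0 := by
  have := G.disj i j
  by_cases hp : G.pos.Adj i j <;> by_cases hn : G.neg.Adj i j <;> simp_all [weighting]

lemma weighting_consistent {a b : ℝ} (ha : 0 < a) (hb : 0 < b) :
    Consistent G (G.weighting a b) := by
  have := G.disj
  constructor <;> ext i j
  · rw [WSG.posGraph_adj, weighting_w_apply]
    by_cases hp : G.pos.Adj i j <;> by_cases hn : G.neg.Adj i j <;> simp_all [hb.le]
  · rw [WSG.negGraph_adj, weighting_w_apply]
    by_cases hp : G.pos.Adj i j <;> by_cases hn : G.neg.Adj i j <;> simp_all [ha.le]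

lemma dirichletEnergy_weighting (a b : ℝ) (x : Fin n → ℝ) :
    dirichletEnergy (G.weighting a b).w x
      = a * dirichletEnergy (G.pos.adjMatrix ℝ) x - b * dirichletEnergy (G.neg.adjMatrix ℝ) x := by
  rw [weighting, dirichletEnergy_sub, dirichletEnergy_smul, dirichletEnergy_smul]

lemma finrank_sup_constOnEdges :
    finrank ℝ ↥(G.pos.constOnEdges ⊔ G.neg.constOnEdges)
      = finrank ℝ ↥(G.graph.constOnEdgesᗮ ⊓ G.pos.constOnEdges) + finrank ℝ G.neg.constOnEdges := by
  have hsup := Submodule.finrank_sup_add_finrank_inf_eq G.pos.constOnEdges G.neg.constOnEdges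
  have hpos := Submodule.finrank_add_inf_finrank_orthogonal G.constOnEdges_graph_le_pos
  rw [← G.constOnEdges_graph] at hsup
  omega

lemma exists_consistent_nPos_eq_finrank_inf :
    ∃ Γ, Consistent G Γ ∧ Γ.nPos = finrank ℝ ↥(G.graph.constOnEdgesᗮ ⊓ G.pos.constOnEdges) := by
  obtain ⟨t, ht, hlt⟩ := G.pos.exists_pos_mul_dirichletEnergy_lt G.neg
  have hc := G.weighting_consistent one_pos ht
  refine ⟨_, hc, congrArg Prod.fst <| (G.weighting 1 t).inertia_eq_of_subspaces _
    G.pos.constOnEdgesᗮ _ (fun x hx => hc.inner_lap_self_pos hx) (fun x hx hx0 => ?_)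
    (fun x hx => hc.toEuclideanLin_lap_eq_zero hx) ?_⟩
  · rw [WSG.inner_toEuclideanLin_lap_self, dirichletEnergy_weighting]
    linarith [hlt x hx hx0]
  · have hpos := Submodule.finrank_add_inf_finrank_orthogonal G.constOnEdges_graph_le_pos
    have horth := G.pos.constOnEdges.finrank_add_finrank_orthogonal
    rw [finrank_euclideanSpace_fin] at horth
    omega

lemma exists_consistent_nPos_eq_finrank_orthogonal :
    ∃ Γ, Consistent G Γ ∧ Γ.nPos = finrank ℝ G.neg.constOnEdgesᗮ := by
  obtain ⟨t, ht, hlt⟩ := G.neg.exists_pos_mul_dirichletEnergy_lt G.pos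
  have hc := G.weighting_consistent ht one_pos
  refine ⟨_, hc, congrArg Prod.fst <| (G.weighting t 1).inertia_eq_of_subspaces
    G.neg.constOnEdgesᗮ _ _ (fun x hx hx0 => ?_) (fun x hx => hc.inner_lap_self_neg hx)
    (fun x hx => hc.toEuclideanLin_lap_eq_zero hx) ?_⟩
  · rw [WSG.inner_toEuclideanLin_lap_self, dirichletEnergy_weighting]
    linarith [hlt x hx hx0]
  · have hneg := Submodule.finrank_add_inf_finrank_orthogonal G.constOnEdges_graph_le_neg
    have horth := G.neg.constOnEdges.finrank_add_finrank_orthogonal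
    rw [finrank_euclideanSpace_fin] at horth
    omega

theorem exists_hasUniqueInertia_iff :
    (∃ T, HasUniqueInertia G T) ↔ G.pos.constOnEdges ⊔ G.neg.constOnEdges = ⊤ := by
  have hsup := G.finrank_sup_constOnEdges
  have hneg := Submodule.finrank_add_inf_finrank_orthogonal G.constOnEdges_graph_le_neg
  constructor
  · rintro ⟨T, hT⟩
    obtain ⟨Γ₁, hc₁, h₁⟩ := G.exists_consistent_nPos_eq_finrank_inf
    obtain ⟨Γ₂, hc₂, h₂⟩ := G.exists_consistent_nPos_eq_finrank_orthogonal
    have h : Γ₁.nPos = Γ₂.nPos := congrArg Prod.fst ((hT Γ₁ hc₁).trans (hT Γ₂ hc₂).symm)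
    have horth := G.neg.constOnEdges.finrank_add_finrank_orthogonal
    refine Submodule.eq_top_of_finrank_eq ?_
    omega
  · intro htop
    refine ⟨_, fun Γ hc => Γ.inertia_eq_of_subspaces _ _ _ (fun x hx => hc.inner_lap_self_pos hx)
      (fun x hx => hc.inner_lap_self_neg hx) (fun x hx => hc.toEuclideanLin_lap_eq_zero hx) ?_⟩
    rw [htop, finrank_top, finrank_euclideanSpace_fin] at hsup
    omega

def SignsSeparated : Prop :=
  ∀ p u v, G.pos.Adj p u → G.neg.Adj p v → ∀ w : G.graph.Walk u v, p ∈ w.support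

lemma mem_support_of_single_mem_sup {p u v : Fin n}
    (h : EuclideanSpace.single p 1 ∈ G.pos.constOnEdges ⊔ G.neg.constOnEdges)
    (hu : G.pos.Adj p u) (hv : G.neg.Adj p v) (w : G.graph.Walk u v) : p ∈ w.support := by
  by_contra hp
  obtain ⟨A, hA, B, hB, hAB⟩ := Submodule.mem_sup.1 h
  have hsum : ∀ i, A i + B i = if i = p then 1 else 0 := fun i => by
    simpa using congrArg (· i) hAB
  -- Off `p` we have `A = -B`, so `A` is constant along every edge avoiding `p`.
  have hconst : ∀ x y, G.graph.Adj x y → x ≠ p → y ≠ p → A x = A y := by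
    rintro x y (hxy | hxy) hx hy
    · exact hA x y hxy
    · have hx' := hsum x
      have hy' := hsum y
      simp only [hx, hy, if_false] at hx' hy'
      linarith [hB x y hxy]
  have huv := w.apply_eq_of_notMem_support hconst hp
  have hp' := hsum p
  have hv' := hsum v
  simp only [if_true, hv.ne', if_false] at hp' hv'
  linarith [hA p u hu, hB p v hv]

lemma single_mem_sup_of_forall_mem_support {p : Fin n}
    (h : ∀ u v, G.pos.Adj p u → G.neg.Adj p v → ∀ w : G.graph.Walk u v, p ∈ w.support) :
    EuclideanSpace.single p 1 ∈ G.pos.constOnEdges ⊔ G.neg.constOnEdges := by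
  set S : Set (Fin n) := {x | ∃ u, G.pos.Adj p u ∧ ∃ w : G.graph.Walk u x, p ∉ w.support}
  have hpS : p ∉ S := fun ⟨_, _, w, hw⟩ => hw w.end_mem_support
  have hstep : ∀ x y, G.graph.Adj x y → y ≠ p → x ∈ S → y ∈ S :=
    fun x y hxy hy ⟨u, hu, w, hw⟩ => ⟨u, hu, w.concat hxy, by simp [hw, Ne.symm hy]⟩
  have hsplit : EuclideanSpace.single p 1 = WithLp.toLp 2 ((insert p S).indicator 1)
      - WithLp.toLp 2 (S.indicator (1 : Fin n → ℝ)) := by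
    ext i
    by_cases hi : i = p
    · simp [hi, hpS]
    · simp [hi, Set.indicator_apply]
  rw [hsplit]
  refine Submodule.sub_mem _ (Submodule.mem_sup_left
    (SimpleGraph.toLp_indicator_mem_constOnEdges ?_)) (Submodule.mem_sup_right
    (SimpleGraph.toLp_indicator_mem_constOnEdges ?_))
  · rintro x y hxy (rfl | hx)
    · exact Or.inr ⟨y, hxy, .nil, by simpa using hxy.ne⟩
    · by_cases hy : y = p
      · exact Or.inl hy
      · exact Or.inr (hstep x y (Or.inl hxy) hy hx)
  · intro x y hxy hx
    by_cases hy : y = p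
    · subst hy
      obtain ⟨u, hu, w, hw⟩ := hx
      exact absurd (h u x hu hxy.symm w) hw
    · exact hstep x y (Or.inr hxy) hy hx

lemma sup_eq_top_iff_signsSeparated :
    G.pos.constOnEdges ⊔ G.neg.constOnEdges = ⊤ ↔ G.SignsSeparated := by
  refine ⟨fun h p u v => G.mem_support_of_single_mem_sup (h ▸ Submodule.mem_top), fun h => ?_⟩
  rw [eq_top_iff, ← (EuclideanSpace.basisFun (Fin n) ℝ).toBasis.span_eq, Submodule.span_le]
  rintro _ ⟨p, rfl⟩
  simpa using G.single_mem_sup_of_forall_mem_support (h p)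

lemma exists_pos_neg_adj_of_walk {B : Set (Fin n)} {x s : B}
    (w : (G.graph.induce B).Walk x s) (hx : ∃ a ∈ B, G.pos.Adj x a)
    (hs : ∃ b ∈ B, G.neg.Adj s b) :
    ∃ v ∈ B, (∃ a ∈ B, G.pos.Adj v a) ∧ ∃ b ∈ B, G.neg.Adj v b := by
  induction w with
  | nil => exact ⟨_, Subtype.prop _, hx, hs⟩
  | @cons x y s h w ih =>
    rcases SimpleGraph.induce_adj.1 h with hpos | hneg
    · exact ih ⟨x, x.2, hpos.symm⟩ hs
    · exact ⟨x, x.2, hx, y, y.2, hneg⟩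

lemma forall_not_mixed_block_iff :
    (∀ B : Set (Fin n), IsBlock G.graph B →
      ¬((∃ i ∈ B, ∃ j ∈ B, G.pos.Adj i j) ∧ (∃ i ∈ B, ∃ j ∈ B, G.neg.Adj i j)))
      ↔ G.SignsSeparated := by
  constructor
  · intro h p u v hu hv w
    by_contra hp
    obtain ⟨B, hB, hpB, huB, hvB⟩ := exists_isBlock_of_walk (Or.inl hu) (Or.inr hv) w hp
    exact h B hB ⟨⟨p, hpB, u, huB, hu⟩, ⟨p, hpB, v, hvB, hv⟩⟩
  · rintro h B ⟨hconn, hcut, -⟩ ⟨⟨u, hu, u', hu', huu'⟩, ⟨s, hs, s', hs', hss'⟩⟩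
    obtain ⟨w⟩ := hconn.preconnected ⟨u, hu⟩ ⟨s, hs⟩
    obtain ⟨p, -, ⟨a, ha, hpa⟩, ⟨b, hb, hpb⟩⟩ :=
      G.exists_pos_neg_adj_of_walk w ⟨u', hu', huu'⟩ ⟨s', hs', hss'⟩
    obtain ⟨q⟩ := hcut p ⟨a, ha, hpa.ne'⟩ ⟨b, hb, hpb.ne'⟩
    have hmem := h p a b hpa hpb (q.map (SimpleGraph.Embedding.induce _).toHom)
    obtain ⟨y, -, hy⟩ := List.mem_map.1 ((SimpleGraph.Walk.support_map _ _) ▸ hmem)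
    exact y.2.2 hy

end SignedGraph

/-- A signed graph has a unique Laplacian inertia iff no block of it contains
both a positive and a negative edge. -/
theorem unique_inertia_iff_no_mixed_block {n : ℕ} (G : SignedGraph n) :
    (∃ T, HasUniqueInertia G T) ↔
    ∀ B : Set (Fin n), IsBlock G.graph B →
      ¬((∃ i ∈ B, ∃ j ∈ B, G.pos.Adj i j) ∧ (∃ i ∈ B, ∃ j ∈ B, G.neg.Adj i j)) := by
  rw [G.exists_hasUniqueInertia_iff, G.sup_eq_top_iff_signsSeparated,
    G.forall_not_mixed_block_iff]

end SGPaper
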